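/- For even d ≥ 2, the function x ↦ h_d(x)^{1/d} on ℝ^n is convex and positively homogeneous of degree 1, and vanishes only at 0; hence it is a norm on ℝ^n. -/

import Mathlib

open MeasureTheory Real Set


/-- Complete homogeneous symmetric polynomial of degree `d` in `n` real variables:
the sum of all degree-`d` monomials in `x 0, ..., x (n-1)`. -/
noncomputable def chs (n d : ℕ) (x : Fin n → ℝ) : ℝ :=
  ∑ s : Sym (Fin n) d, ((s : Multiset (Fin n)).map x).prod

noncomputable def expM : Measure ℝ :=
  (volume.restrict (Ioi (0:ℝ))).withDensity fun t => ENNReal.ofReal (Real.exp (-t))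

def Rexp : Type := ℝ

noncomputable instance : MeasureSpace Rexp :=
  { toMeasurableSpace := inferInstanceAs (MeasurableSpace ℝ), volume := expM }

def toR : Rexp → ℝ := id

instance : IsProbabilityMeasure expM := by
  constructor
  rw [expM, withDensity_apply _ MeasurableSet.univ, Measure.restrict_univ,
    ← ofReal_integral_eq_lintegral_ofReal]
  · rw [integral_exp_neg_Ioi]; simp
  · exact exp_neg_integrableOn_Ioi 0 one_pos |>.congr_fun (by intro x _; simp) measurableSet_Ioi
  · exact Filter.Eventually.of_forall fun t => (exp_pos _).le

instance : SigmaFinite (volume : Measure Rexp) :=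
  inferInstanceAs (SigmaFinite expM)

lemma expM_integrable (k : ℕ) : Integrable (fun t : ℝ => t ^ k) expM := by
  rw [expM, integrable_withDensity_iff (by fun_prop)
    (Filter.Eventually.of_forall fun t => ENNReal.ofReal_lt_top)]
  have := Real.GammaIntegral_convergent (s := (k+1:ℝ)) (by positivity)
  refine (this.congr_fun ?_ measurableSet_Ioi)
  intro t ht
  show rexp (-t) * t ^ ((k:ℝ) + 1 - 1) = t ^ k * (ENNReal.ofReal (rexp (-t))).toReal
  rw [ENNReal.toReal_ofReal (exp_pos _).le, show (k:ℝ)+1-1 = (k:ℝ) by ring, rpow_natCast]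
  ring

lemma expM_moment (k : ℕ) : ∫ t, t ^ k ∂expM = (Nat.factorial k : ℝ) := by
  have hmeas : Measurable fun t : ℝ => (Real.exp (-t)).toNNReal := by fun_prop
  have h : expM = (volume.restrict (Ioi (0:ℝ))).withDensity
      fun t => (((Real.exp (-t)).toNNReal : NNReal) : ENNReal) := rfl
  rw [h, integral_withDensity_eq_integral_smul hmeas]
  have h2 : ∫ t in Ioi (0:ℝ), (Real.exp (-t)).toNNReal • t ^ k
      = ∫ t in Ioi (0:ℝ), Real.exp (-t) * t ^ ((k+1:ℝ) - 1) := by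
    refine setIntegral_congr_fun measurableSet_Ioi fun t ht => ?_
    rw [show (k+1:ℝ)-1 = (k:ℝ) by ring, rpow_natCast, NNReal.smul_def,
      Real.coe_toNNReal _ (exp_pos _).le, smul_eq_mul]
  rw [h2, ← Real.Gamma_eq_integral (by positivity)]
  exact_mod_cast Real.Gamma_nat_eq_factorial k

lemma multiset_prod_eq {n : ℕ} (m : Multiset (Fin n)) (g : Fin n → ℝ) :
    (m.map g).prod = ∏ i, g i ^ m.count i :=
  (Finset.prod_multiset_map_count m g).trans <|
    Finset.prod_subset (Finset.subset_univ _) fun i _ hi => by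
      rw [Multiset.count_eq_zero_of_notMem (by simpa using hi), pow_zero]

lemma multinomial_mul {n : ℕ} (d : ℕ) (m : Multiset (Fin n)) (hm : Multiset.card m = d) :
    (∏ i : Fin n, Nat.factorial (m.count i)) * m.countPerms = Nat.factorial d := by
  have h1 : ∏ i : Fin n, Nat.factorial (m.count i)
      = ∏ i ∈ m.toFinset, Nat.factorial (m.count i) :=
    (Finset.prod_subset (Finset.subset_univ _) fun i _ hi => by
      rw [Multiset.count_eq_zero_of_notMem (by simpa using hi)]; rfl).symm
  have h2 : m.countPerms = Nat.multinomial m.toFinset m.count := by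
    rw [Multiset.countPerms, Finsupp.multinomial_eq]
    simp [Nat.multinomial]
  rw [h1, h2]
  have := Nat.multinomial_spec m.toFinset m.count
  rwa [Multiset.toFinset_sum_count_eq, hm] at this

lemma pi_moment {n : ℕ} (m : Fin n → ℕ) :
    ∫ ω : Fin n → Rexp, ∏ i, toR (ω i) ^ m i = ∏ i, (Nat.factorial (m i) : ℝ) := by
  rw [MeasureTheory.integral_fintype_prod_volume_eq_prod (f := fun i (t : Rexp) => toR t ^ m i)]
  exact Finset.prod_congr rfl fun i _ => expM_moment (m i)

lemma pi_integrable {n : ℕ} (m : Fin n → ℕ) :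
    Integrable (fun ω : Fin n → Rexp => ∏ i, toR (ω i) ^ m i) :=
  Integrable.fintype_prod_dep (f := fun i (t : Rexp) => toR t ^ m i)
    fun i => expM_integrable (m i)

lemma expand {n d : ℕ} (x : Fin n → ℝ) (ω : Fin n → Rexp) :
    (∑ i, x i * toR (ω i)) ^ d
      = ∑ s : Sym (Fin n) d,
          ((Multiset.countPerms s.1 : ℝ) * (Multiset.map x s.1).prod)
            * ∏ i, toR (ω i) ^ Multiset.count i s.1 := by
  rw [show (∑ i, x i * toR (ω i)) = Finset.univ.sum (fun i => x i * toR (ω i)) from rfl,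
    Finset.sum_pow, Finset.sym_univ]
  refine Finset.sum_congr rfl fun s _ => ?_
  rw [show (Multiset.map (fun i => x i * toR (ω i)) s.1).prod
      = (Multiset.map x s.1).prod * (Multiset.map (fun i => toR (ω i)) s.1).prod by
    rw [← Multiset.prod_map_mul],
    multiset_prod_eq s.1 (fun i => toR (ω i)), mul_assoc]

lemma key {n : ℕ} (d : ℕ) (x : Fin n → ℝ) :
    ∫ ω : Fin n → Rexp, (∑ i, x i * toR (ω i)) ^ d
      = (Nat.factorial d : ℝ) * chs n d x := by
  rw [show (fun ω : Fin n → Rexp => (∑ i, x i * toR (ω i)) ^ d)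
      = fun ω => ∑ s : Sym (Fin n) d,
          ((Multiset.countPerms s.1 : ℝ) * (Multiset.map x s.1).prod)
            * ∏ i, toR (ω i) ^ Multiset.count i s.1 from funext fun ω => expand x ω]
  rw [integral_finset_sum _ fun s _ => (pi_integrable _).const_mul _]
  rw [chs, Finset.mul_sum]
  refine Finset.sum_congr rfl fun s _ => ?_
  rw [integral_const_mul, pi_moment]
  have h := multinomial_mul d s.1 s.2
  have h' : (∏ i : Fin n, (Nat.factorial (Multiset.count i s.1) : ℝ))
      * (Multiset.countPerms s.1 : ℝ) = (Nat.factorial d : ℝ) := by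
    exact_mod_cast congrArg (Nat.cast : ℕ → ℝ) h
  rw [show (Multiset.countPerms s.1 : ℝ) * (Multiset.map x s.1).prod
      * ∏ i, (Nat.factorial (Multiset.count i s.1) : ℝ)
      = ((∏ i, (Nat.factorial (Multiset.count i s.1) : ℝ))
        * (Multiset.countPerms s.1 : ℝ)) * (Multiset.map x s.1).prod by ring, h']
  rfl

lemma key_integrable {n : ℕ} (d : ℕ) (x : Fin n → ℝ) :
    Integrable (fun ω : Fin n → Rexp => (∑ i, x i * toR (ω i)) ^ d) := by
  rw [show (fun ω : Fin n → Rexp => (∑ i, x i * toR (ω i)) ^ d)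
      = fun ω => ∑ s : Sym (Fin n) d,
          ((Multiset.countPerms s.1 : ℝ) * (Multiset.map x s.1).prod)
            * ∏ i, toR (ω i) ^ Multiset.count i s.1 from funext fun ω => expand x ω]
  exact integrable_finset_sum _ fun s _ => (pi_integrable _).const_mul _

lemma hu_meas {n : ℕ} (x : Fin n → ℝ) :
    Measurable fun ω : Fin n → Rexp => ENNReal.ofReal |∑ i, x i * toR (ω i)| := by
  refine ENNReal.measurable_ofReal.comp ?_
  refine Measurable.abs (Finset.measurable_sum _ fun i _ => ?_)
  exact (measurable_const.mul (show Measurable fun ω : Fin n → Rexp => toR (ω i) from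
    measurable_pi_apply i))

lemma chs_nonneg {n : ℕ} (d : ℕ) (hd : Even d) (x : Fin n → ℝ) : 0 ≤ chs n d x := by
  have h := key (n := n) d x
  have h2 : 0 ≤ ∫ ω : Fin n → Rexp, (∑ i, x i * toR (ω i)) ^ d :=
    integral_nonneg fun ω => hd.pow_nonneg _
  rw [h] at h2
  have : (0:ℝ) < (Nat.factorial d : ℝ) := by positivity
  nlinarith

lemma F_eq {n : ℕ} (d : ℕ) (hd : Even d) (x : Fin n → ℝ) :
    ∫⁻ ω : Fin n → Rexp, (ENNReal.ofReal |∑ i, x i * toR (ω i)|) ^ d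
      = ENNReal.ofReal ((Nat.factorial d : ℝ) * chs n d x) := by
  rw [← key (n := n) d x,
    ofReal_integral_eq_lintegral_ofReal (key_integrable d x)
      (Filter.Eventually.of_forall fun ω => hd.pow_nonneg _)]
  refine lintegral_congr fun ω => ?_
  rw [← hd.pow_abs, ENNReal.ofReal_pow (abs_nonneg _)]

lemma F_tri {n : ℕ} (d : ℕ) (hd : Even d) (hd2 : 2 ≤ d) (x y : Fin n → ℝ) :
    ((Nat.factorial d : ℝ) * chs n d (x + y)) ^ ((1:ℝ)/d)
      ≤ ((Nat.factorial d : ℝ) * chs n d x) ^ ((1:ℝ)/d)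
        + ((Nat.factorial d : ℝ) * chs n d y) ^ ((1:ℝ)/d) := by
  have hd1 : (1:ℝ) ≤ (d:ℝ) := by exact_mod_cast Nat.one_le_of_lt hd2
  set u := fun ω : Fin n → Rexp => ENNReal.ofReal |∑ i, x i * toR (ω i)| with hu
  set v := fun ω : Fin n → Rexp => ENNReal.ofReal |∑ i, y i * toR (ω i)| with hv
  have mink := ENNReal.lintegral_Lp_add_le (μ := (volume : Measure (Fin n → Rexp)))
    (hu_meas x).aemeasurable (hu_meas y).aemeasurable hd1
  have hmono : ∫⁻ ω : Fin n → Rexp, (ENNReal.ofReal |∑ i, (x + y) i * toR (ω i)|) ^ (d:ℝ)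
      ≤ ∫⁻ ω, ((u + v) ω) ^ (d:ℝ) := by
    refine lintegral_mono fun ω => ?_
    refine ENNReal.rpow_le_rpow ?_ (by positivity)
    have : ∑ i, (x + y) i * toR (ω i)
        = (∑ i, x i * toR (ω i)) + ∑ i, y i * toR (ω i) := by
      rw [← Finset.sum_add_distrib]; exact Finset.sum_congr rfl fun i _ => by
        simp [add_mul]
    rw [this]
    calc ENNReal.ofReal |(∑ i, x i * toR (ω i)) + ∑ i, y i * toR (ω i)|
        ≤ ENNReal.ofReal (|∑ i, x i * toR (ω i)| + |∑ i, y i * toR (ω i)|) :=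
          ENNReal.ofReal_le_ofReal (abs_add_le _ _)
      _ = u ω + v ω := ENNReal.ofReal_add (abs_nonneg _) (abs_nonneg _)
  have h1 : ∀ z : Fin n → ℝ,
      ∫⁻ ω : Fin n → Rexp, (ENNReal.ofReal |∑ i, z i * toR (ω i)|) ^ (d:ℝ)
        = ENNReal.ofReal ((Nat.factorial d : ℝ) * chs n d z) := by
    intro z
    rw [← F_eq d hd z]
    exact lintegral_congr fun ω => by rw [ENNReal.rpow_natCast]
  have key1 : (ENNReal.ofReal ((Nat.factorial d : ℝ) * chs n d (x + y))) ^ ((1:ℝ)/d)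
      ≤ (ENNReal.ofReal ((Nat.factorial d : ℝ) * chs n d x)) ^ ((1:ℝ)/d)
        + (ENNReal.ofReal ((Nat.factorial d : ℝ) * chs n d y)) ^ ((1:ℝ)/d) := by
    rw [← h1 x, ← h1 y, ← h1 (x + y)]
    exact le_trans (ENNReal.rpow_le_rpow hmono (by positivity)) mink
  have hc : ∀ z : Fin n → ℝ, 0 ≤ (Nat.factorial d : ℝ) * chs n d z :=
    fun z => mul_nonneg (by positivity) (chs_nonneg d hd z)
  have hre : ∀ z : Fin n → ℝ,
      (ENNReal.ofReal ((Nat.factorial d : ℝ) * chs n d z)) ^ ((1:ℝ)/d)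
        = ENNReal.ofReal (((Nat.factorial d : ℝ) * chs n d z) ^ ((1:ℝ)/d)) := by
    intro z
    rw [ENNReal.ofReal_rpow_of_nonneg (hc z) (by positivity)]
  have hr : ∀ z : Fin n → ℝ, 0 ≤ ((Nat.factorial d : ℝ) * chs n d z) ^ ((1:ℝ)/d) :=
    fun z => Real.rpow_nonneg (hc z) _
  rw [hre, hre, hre, ← ENNReal.ofReal_add (hr x) (hr y)] at key1
  exact (ENNReal.ofReal_le_ofReal_iff (add_nonneg (hr x) (hr y))).mp key1

lemma chs_smul {n : ℕ} (d : ℕ) (c : ℝ) (x : Fin n → ℝ) :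
    chs n d (c • x) = c ^ d * chs n d x := by
  rw [chs, chs, Finset.mul_sum]
  refine Finset.sum_congr rfl fun s _ => ?_
  have h1 : (Multiset.map (c • x) s.1).prod
      = (Multiset.map (fun i => (fun _ : Fin n => c) i * x i) s.1).prod := rfl
  refine h1.trans ?_
  rw [Multiset.prod_map_mul, Multiset.map_const', Multiset.prod_replicate]
  congr 2
  exact s.2

lemma chs_zero_eq {n : ℕ} (d : ℕ) (hd0 : d ≠ 0) : chs n d (0 : Fin n → ℝ) = 0 := by
  rw [chs]
  refine Finset.sum_eq_zero fun s _ => ?_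
  have : (0 : Fin n → ℝ) = fun _ => (0:ℝ) := rfl
  rw [this, Multiset.map_const', Multiset.prod_replicate]
  exact zero_pow (by simp [s.2, hd0])

lemma expM_Ioo_ne_zero (a : ℝ) (ha : 0 ≤ a) : expM (Ioo a (a+1)) ≠ 0 := by
  have hsub : Ioo a (a+1) ⊆ Ioi (0:ℝ) := fun t ht => lt_of_le_of_lt ha ht.1
  rw [expM, withDensity_apply _ measurableSet_Ioo,
    Measure.restrict_restrict measurableSet_Ioo, Set.inter_eq_left.mpr hsub]
  have hbound : ENNReal.ofReal (Real.exp (-(a+1))) * volume (Ioo a (a+1))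
      ≤ ∫⁻ t in Ioo a (a+1), ENNReal.ofReal (Real.exp (-t)) := by
    rw [← setLIntegral_const]
    refine setLIntegral_mono (by fun_prop) fun t ht => ?_
    exact ENNReal.ofReal_le_ofReal (Real.exp_le_exp.mpr (by linarith [ht.2]))
  intro h0
  rw [h0] at hbound
  have : ENNReal.ofReal (Real.exp (-(a+1))) * volume (Ioo a (a+1)) ≠ 0 := by
    refine mul_ne_zero ?_ ?_
    · simp [ENNReal.ofReal_eq_zero, not_le, Real.exp_pos]
    · rw [Real.volume_Ioo]
      simp [ENNReal.ofReal_eq_zero]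
  exact this (le_antisymm hbound zero_le)

lemma chs_pos_dir {n : ℕ} (d : ℕ) (hd : Even d) (hd0 : d ≠ 0) (x : Fin n → ℝ)
    (hchs : chs n d x = 0) (i₀ : Fin n) (hx : 0 < x i₀) : False := by
  -- the set where the linear form is nonzero is null
  have hF : ∫⁻ ω : Fin n → Rexp, (ENNReal.ofReal |∑ i, x i * toR (ω i)|) ^ d = 0 := by
    rw [F_eq d hd x, hchs, mul_zero, ENNReal.ofReal_zero]
  have hmeas : Measurable fun ω : Fin n → Rexp =>
      (ENNReal.ofReal |∑ i, x i * toR (ω i)|) ^ d := (hu_meas x).pow_const d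
  have hae := (lintegral_eq_zero_iff hmeas).mp hF
  have hnull : volume {ω : Fin n → Rexp | ∑ i, x i * toR (ω i) ≠ 0} = 0 := by
    have : {ω : Fin n → Rexp | ∑ i, x i * toR (ω i) ≠ 0}
        ⊆ {ω | ¬ ((ENNReal.ofReal |∑ i, x i * toR (ω i)|) ^ d = 0)} := by
      intro ω hω
      simp only [Set.mem_setOf_eq, pow_eq_zero_iff hd0, ENNReal.ofReal_eq_zero, not_le]
      exact abs_pos.mpr hω
    exact measure_mono_null this hae
  -- construct a box of positive measure on which the linear form is positive
  classical
  set P : Finset (Fin n) := Finset.univ.filter (fun i => 0 < x i) with hP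
  have hi₀ : i₀ ∈ P := Finset.mem_filter.mpr ⟨Finset.mem_univ _, hx⟩
  have hsP : 0 < ∑ i ∈ P, x i :=
    Finset.sum_pos (fun i hi => (Finset.mem_filter.mp hi).2) ⟨i₀, hi₀⟩
  set M : ℝ := (1 + ∑ i ∈ Pᶜ, |x i|) / (∑ i ∈ P, x i) with hM
  have hM0 : 0 < M := by
    refine div_pos ?_ hsP
    have : 0 ≤ ∑ i ∈ Pᶜ, |x i| := Finset.sum_nonneg fun i _ => abs_nonneg _
    linarith
  set a : Fin n → ℝ := fun i => if i ∈ P then M else 0 with ha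
  have ha0 : ∀ i, 0 ≤ a i := fun i => by
    rw [ha]; dsimp only; split
    · exact hM0.le
    · exact le_rfl
  set B : Set (Fin n → Rexp) := Set.pi Set.univ
    (fun i => (show Set Rexp from (Ioo (a i) (a i + 1) : Set ℝ))) with hB
  -- positive on B
  have hpos : ∀ ω ∈ B, 0 < ∑ i, x i * toR (ω i) := by
    intro ω hω
    have hω' : ∀ i, a i < toR (ω i) ∧ toR (ω i) < a i + 1 := fun i => hω i trivial
    have hsplit : ∑ i, x i * toR (ω i)
        = ∑ i ∈ P, x i * toR (ω i) + ∑ i ∈ Pᶜ, x i * toR (ω i) :=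
      (Finset.sum_add_sum_compl P _).symm
    have h1 : M * ∑ i ∈ P, x i ≤ ∑ i ∈ P, x i * toR (ω i) := by
      rw [Finset.mul_sum]
      refine Finset.sum_le_sum fun i hi => ?_
      have hxi : 0 < x i := (Finset.mem_filter.mp hi).2
      have : M ≤ toR (ω i) := by
        have := (hω' i).1; rw [ha] at this; simp only [if_pos hi] at this; linarith
      nlinarith
    have h2 : -∑ i ∈ Pᶜ, |x i| ≤ ∑ i ∈ Pᶜ, x i * toR (ω i) := by
      rw [← Finset.sum_neg_distrib]
      refine Finset.sum_le_sum fun i hi => ?_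
      have hxi : ¬ (0 < x i) := by
        have := Finset.mem_compl.mp hi
        simpa [hP] using this
      push_neg at hxi
      have hω1 : 0 < toR (ω i) ∧ toR (ω i) < 1 := by
        have h := hω' i; rw [ha] at h
        simp only [if_neg (Finset.mem_compl.mp hi)] at h
        exact ⟨by linarith [h.1], by linarith [h.2]⟩
      rw [abs_of_nonpos hxi]
      nlinarith [hω1.1, hω1.2]
    have hMsP : M * ∑ i ∈ P, x i = 1 + ∑ i ∈ Pᶜ, |x i| := by
      rw [hM, div_mul_cancel₀ _ (ne_of_gt hsP)]
    rw [hsplit]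
    nlinarith
  -- B has positive measure
  have hBpos : volume B ≠ 0 := by
    rw [hB, volume_pi, Measure.pi_pi]
    rw [Finset.prod_ne_zero_iff]
    intro i _
    exact expM_Ioo_ne_zero (a i) (ha0 i)
  have : B ⊆ {ω : Fin n → Rexp | ∑ i, x i * toR (ω i) ≠ 0} :=
    fun ω hω => ne_of_gt (hpos ω hω)
  exact hBpos (measure_mono_null this hnull)

lemma chs_eq_zero_iff {n : ℕ} (d : ℕ) (hd : Even d) (hd0 : d ≠ 0) (x : Fin n → ℝ)
    (hchs : chs n d x = 0) : x = 0 := by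
  by_contra hx
  have ⟨i, hi⟩ : ∃ i, x i ≠ 0 := by
    by_contra h; push_neg at h; exact hx (funext fun i => h i)
  rcases hi.lt_or_gt with h | h
  · have hneg : chs n d (-x) = 0 := by
      have : -x = (-1 : ℝ) • x := by ext i; simp
      rw [this, chs_smul, hd.neg_one_pow, one_mul, hchs]
    exact chs_pos_dir d hd hd0 (-x) hneg i (by simpa using h)
  · exact chs_pos_dir d hd hd0 x hchs i h

theorem chs_rpow_is_norm (n d : ℕ) (hd : Even d) (hd2 : 2 ≤ d)
    (f : (Fin n → ℝ) → ℝ) (hf : ∀ x, f x = chs n d x ^ ((1 : ℝ) / d)) :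
    ConvexOn ℝ Set.univ f ∧
    (∀ (c : ℝ), 0 ≤ c → ∀ x, f (c • x) = c * f x) ∧
    (∀ x, f x = 0 ↔ x = 0) ∧
    (∀ x, 0 ≤ f x) ∧
    (∀ (c : ℝ) (x), f (c • x) = |c| * f x) ∧
    (∀ x y, f (x + y) ≤ f x + f y) := by
  have hd0 : d ≠ 0 := by omega
  have hdR : (d:ℝ) ≠ 0 := Nat.cast_ne_zero.mpr hd0
  have hnonneg : ∀ x, 0 ≤ f x := fun x => by
    rw [hf]; exact Real.rpow_nonneg (chs_nonneg d hd x) _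
  have habs : ∀ (c : ℝ) (x), f (c • x) = |c| * f x := by
    intro c x
    rw [hf, hf, chs_smul, show c ^ d = |c| ^ d from (hd.pow_abs c).symm,
      Real.mul_rpow (pow_nonneg (abs_nonneg c) d) (chs_nonneg d hd x)]
    congr 1
    rw [← Real.rpow_natCast |c| d, ← Real.rpow_mul (abs_nonneg c),
      mul_one_div_cancel hdR, Real.rpow_one]
  have hhom : ∀ (c : ℝ), 0 ≤ c → ∀ x, f (c • x) = c * f x := by
    intro c hc x
    rw [habs, abs_of_nonneg hc]
  have htri : ∀ x y, f (x + y) ≤ f x + f y := by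
    intro x y
    have key1 := F_tri (n := n) d hd hd2 x y
    have hsplit : ∀ z : Fin n → ℝ,
        ((Nat.factorial d : ℝ) * chs n d z) ^ ((1:ℝ)/d)
          = (Nat.factorial d : ℝ) ^ ((1:ℝ)/d) * f z := by
      intro z
      rw [Real.mul_rpow (by positivity) (chs_nonneg d hd z), hf]
    rw [hsplit, hsplit, hsplit, ← mul_add] at key1
    have hcpos : (0:ℝ) < (Nat.factorial d : ℝ) ^ ((1:ℝ)/d) :=
      Real.rpow_pos_of_pos (by positivity) _
    exact le_of_mul_le_mul_left key1 hcpos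
  have hdef : ∀ x, f x = 0 ↔ x = 0 := by
    intro x
    constructor
    · intro hx
      refine chs_eq_zero_iff d hd hd0 x ?_
      by_contra hne
      have hpos : 0 < chs n d x := lt_of_le_of_ne (chs_nonneg d hd x) (Ne.symm hne)
      have := Real.rpow_pos_of_pos hpos ((1:ℝ)/d)
      rw [← hf x, hx] at this
      exact lt_irrefl 0 this
    · intro hx
      rw [hx, hf, chs_zero_eq d hd0, Real.zero_rpow (by positivity)]
  have hconv : ConvexOn ℝ Set.univ f := by
    refine ⟨convex_univ, fun x _ y _ a b ha hb hab => ?_⟩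
    calc f (a • x + b • y) ≤ f (a • x) + f (b • y) := htri _ _
      _ = a * f x + b * f y := by rw [hhom a ha, hhom b hb]
      _ = a • f x + b • f y := rfl
  exact ⟨hconv, hhom, hdef, hnonneg, habs, htri⟩
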